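/- arXiv:2007.12576 — 2 statements merged into one kernel-verified Lean document; each statement's English description precedes it below -/
import Mathlib

section
/- Let α ∈ (1,∞), let ρ be a nonzero positive semidefinite complex matrix and σ a positive definite complex matrix of the same size, and assume ρ and σ commute (ρσ = σρ). Then D^#_α(ρ‖σ) = (1/(α−1)) · log₂ tr(ρ^α σ^(1−α)), i.e., D^#_α coincides with the classical α-Rényi divergence of the commuting pair. -/
open Matrix Filter
open scoped Kronecker Classical ComplexOrder

noncomputable def Matrix.rpowH {n : Type*} [Fintype n] [DecidableEq n]
    (A : Matrix n n ℂ) (r : ℝ) : Matrix n n ℂ :=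
  if hA : A.IsHermitian then
    (hA.eigenvectorUnitary : Matrix n n ℂ) *
      Matrix.diagonal (fun i => ((hA.eigenvalues i ^ r : ℝ) : ℂ)) *
      star (hA.eigenvectorUnitary : Matrix n n ℂ)
  else 0

noncomputable def Matrix.gmean {n : Type*} [Fintype n] [DecidableEq n]
    (β : ℝ) (S A : Matrix n n ℂ) : Matrix n n ℂ :=
  S.rpowH (1/2) * ((S.rpowH (-(1/2)) * A * S.rpowH (-(1/2))).rpowH β) * S.rpowH (1/2)

noncomputable def QSharp {n : Type*} [Fintype n] [DecidableEq n]
    (α : ℝ) (ρ σ : Matrix n n ℂ) : ℝ :=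
  sInf { t : ℝ | ∃ A : Matrix n n ℂ, A.PosSemidef ∧
    (Matrix.gmean (1/α) σ A - ρ).PosSemidef ∧ t = A.trace.re }

noncomputable def DSharp {n : Type*} [Fintype n] [DecidableEq n]
    (α : ℝ) (ρ σ : Matrix n n ℂ) : ℝ :=
  1/(α-1) * Real.logb 2 (QSharp α ρ σ)

noncomputable def opNorm {n : Type*} [Fintype n] [DecidableEq n] (A : Matrix n n ℂ) : ℝ :=
  ‖(Matrix.toEuclideanCLM (𝕜 := ℂ) A : EuclideanSpace ℂ n →L[ℂ] EuclideanSpace ℂ n)‖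

noncomputable def Dtilde {n : Type*} [Fintype n] [DecidableEq n]
    (α : ℝ) (ρ σ : Matrix n n ℂ) : ℝ :=
  1/(α-1) * Real.logb 2
    (((σ.rpowH ((1-α)/(2*α)) * ρ * σ.rpowH ((1-α)/(2*α))).rpowH α).trace.re)

noncomputable def Dhat {n : Type*} [Fintype n] [DecidableEq n]
    (α : ℝ) (ρ σ : Matrix n n ℂ) : ℝ :=
  1/(α-1) * Real.logb 2
    ((σ.rpowH (1/2) * ((σ.rpowH (-(1/2)) * ρ * σ.rpowH (-(1/2))).rpowH α) * σ.rpowH (1/2)).trace.re)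

/-!
Commuting `ρ` and `σ` are diagonal in a common orthonormal basis, and everything entering
`Q^#_α` (the powers `rpowH`, the geometric mean, positivity and the trace) is covariant under
unitary conjugation, so one may assume `ρ = diag p` and `σ = diag s`.
Then `A = diag (p ^ α * s ^ (1 - α))` satisfies `σ #_{1/α} A = ρ`. Conversely, if
`ρ ≤ σ #_{1/α} A`, compare diagonal entries: writing `B = σ^{-1/2} A σ^{-1/2} = W diag μ W*`,
`(B ^ (1/α))ᵢᵢ = ∑ⱼ |Wᵢⱼ|² μⱼ ^ (1/α) ≤ Bᵢᵢ ^ (1/α)` by Jensen's inequality for the concave map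
`x ↦ x ^ (1/α)`, whence `pᵢ ≤ sᵢ ^ (1 - 1/α) * Aᵢᵢ ^ (1/α)`, i.e. `Aᵢᵢ ≥ pᵢ ^ α * sᵢ ^ (1 - α)`;
summing over `i` bounds `tr A` from below by `tr (ρ ^ α σ ^ (1 - α))`.
-/

open Unitary

theorem Unitary.eq_mul_mul_star_iff {R : Type*} [Monoid R] [StarMul R] {V : R}
    (hV : V ∈ unitary R) {X Y : R} : X = V * Y * star V ↔ X * V = V * Y := by
  constructor
  · rintro rfl
    rw [mul_assoc, Unitary.star_mul_self_of_mem hV, mul_one]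
  · intro h
    rw [← h, mul_assoc, Unitary.mul_star_self_of_mem hV, mul_one]

theorem Unitary.conjStarAlgAut_apply_eq_iff {S R : Type*} [Semiring R] [StarMul R] [SMul S R]
    [IsScalarTower S R R] [SMulCommClass S R R] (U W : unitary R) {X Y : R} :
    conjStarAlgAut S R U X = conjStarAlgAut S R W Y ↔
      X * ↑(star U * W) = ↑(star U * W) * Y := by
  rw [← eq_mul_mul_star_iff (star U * W).2, ← conjStarAlgAut_apply (S := S),
    conjStarAlgAut_mul_apply, ← conjStarAlgAut_symm, StarAlgEquiv.eq_symm_apply]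

theorem Real.rpow_half_mul_rpow_mul_rpow_half {s a : ℝ} (hs : 0 < s) (ha : 0 ≤ a) (β : ℝ) :
    s ^ (1/2 : ℝ) * (s ^ (-(1/2) : ℝ) * a * s ^ (-(1/2) : ℝ)) ^ β * s ^ (1/2 : ℝ) =
      s ^ (1 - β) * a ^ β := by
  have hmid : s ^ (-(1/2) : ℝ) * a * s ^ (-(1/2) : ℝ) = a * s ^ (-1 : ℝ) := by
    rw [mul_comm _ a, mul_assoc, ← Real.rpow_add hs]
    norm_num
  rw [hmid, Real.mul_rpow ha (Real.rpow_nonneg hs.le _), ← Real.rpow_mul hs.le,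
    show s ^ (1/2 : ℝ) * (a ^ β * s ^ (-1 * β)) * s ^ (1/2 : ℝ) =
      (s ^ (1/2 : ℝ) * s ^ (-1 * β) * s ^ (1/2 : ℝ)) * a ^ β by ring,
    ← Real.rpow_add hs, ← Real.rpow_add hs]
  ring_nf

theorem Real.rpow_one_sub_inv_mul_rpow_inv {p s α : ℝ} (hp : 0 ≤ p) (hs : 0 < s) (hα : α ≠ 0) :
    s ^ (1 - 1/α) * (p ^ α * s ^ (1 - α)) ^ (1/α) = p := by
  rw [Real.mul_rpow (Real.rpow_nonneg hp _) (Real.rpow_nonneg hs.le _), ← Real.rpow_mul hp,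
    ← Real.rpow_mul hs.le, mul_one_div_cancel hα, Real.rpow_one, mul_left_comm,
    ← Real.rpow_add hs, show 1 - 1/α + (1 - α) * (1/α) = 0 by field_simp; ring, Real.rpow_zero,
    mul_one]

namespace Matrix

variable {n : Type*}

theorem submatrix_sigmaFiberEquiv_eq_blockDiagonal' {R κ : Type*} [Zero R] [DecidableEq κ]
    (f : n → κ) {M : Matrix n n R} (hM : ∀ i j, f i ≠ f j → M i j = 0) :
    M.submatrix (Equiv.sigmaFiberEquiv f) (Equiv.sigmaFiberEquiv f) =
      blockDiagonal' fun k => M.submatrix ((↑) : {i // f i = k} → n) (↑) := by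
  ext ⟨k, i⟩ ⟨k', j⟩
  by_cases h : k = k'
  · subst h
    rw [blockDiagonal'_apply_eq]
    rfl
  · rw [blockDiagonal'_apply_ne _ _ _ h]
    exact hM _ _ (by simpa [i.2, j.2] using h)

variable [DecidableEq n]

theorem isHermitian_diagonal_ofReal (d : n → ℝ) : (diagonal fun i => (d i : ℂ)).IsHermitian :=
  isHermitian_diagonal_iff.mpr fun i => Complex.conj_ofReal (d i)

variable [Fintype n]

theorem diagonal_mul_eq_mul_diagonal_iff {R : Type*} [CommRing R] [NoZeroDivisors R]
    {d e : n → R} {V : Matrix n n R} :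
    diagonal d * V = V * diagonal e ↔ ∀ i j, d i ≠ e j → V i j = 0 := by
  simp only [← ext_iff, diagonal_mul, mul_diagonal]
  refine ⟨fun h i j hij => ?_, fun h i j => ?_⟩
  · have hsub : (d i - e j) * V i j = 0 := by linear_combination h i j
    exact (mul_eq_zero.mp hsub).resolve_left (sub_ne_zero.mpr hij)
  · by_cases hij : d i = e j
    · rw [hij, mul_comm]
    · simp [h i j hij]

theorem conjStarAlgAut_diagonal_comp_of_eq (U W : unitary (Matrix n n ℂ)) {d e : n → ℝ}
    (h : conjStarAlgAut ℂ _ U (diagonal fun i => (d i : ℂ)) =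
      conjStarAlgAut ℂ _ W (diagonal fun i => (e i : ℂ))) (f : ℝ → ℝ) :
    conjStarAlgAut ℂ _ U (diagonal fun i => (f (d i) : ℂ)) =
      conjStarAlgAut ℂ _ W (diagonal fun i => (f (e i) : ℂ)) := by
  rw [conjStarAlgAut_apply_eq_iff, diagonal_mul_eq_mul_diagonal_iff] at h ⊢
  exact fun i j hij => h i j fun hde => hij (by rw [show d i = e j by exact_mod_cast hde])

theorem IsHermitian.conjStarAlgAut_apply {M : Matrix n n ℂ} (hM : M.IsHermitian)
    (U : unitary (Matrix n n ℂ)) : (Unitary.conjStarAlgAut ℂ _ U M).IsHermitian :=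
  isHermitian_iff_isSelfAdjoint.mpr ((isHermitian_iff_isSelfAdjoint.mp hM).map _)

theorem posSemidef_conjStarAlgAut_iff (U : unitary (Matrix n n ℂ)) {M : Matrix n n ℂ} :
    (conjStarAlgAut ℂ _ U M).PosSemidef ↔ M.PosSemidef := by
  rw [conjStarAlgAut_apply]
  exact isUnit_coe.posSemidef_star_right_conjugate_iff

theorem posDef_conjStarAlgAut_iff (U : unitary (Matrix n n ℂ)) {M : Matrix n n ℂ} :
    (conjStarAlgAut ℂ _ U M).PosDef ↔ M.PosDef := by
  rw [conjStarAlgAut_apply]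
  exact IsUnit.posDef_star_right_conjugate_iff isUnit_coe

theorem trace_conjStarAlgAut (U : unitary (Matrix n n ℂ)) (M : Matrix n n ℂ) :
    (conjStarAlgAut ℂ _ U M).trace = M.trace := by
  rw [conjStarAlgAut_apply, trace_mul_cycle, star_mul_self_of_mem U.2, one_mul]

theorem IsHermitian.spectral_theorem_ofReal {M : Matrix n n ℂ} (hM : M.IsHermitian) :
    M = conjStarAlgAut ℂ _ hM.eigenvectorUnitary (diagonal fun i => (hM.eigenvalues i : ℂ)) :=
  hM.spectral_theorem

theorem IsHermitian.rpowH_eq {A : Matrix n n ℂ} (hA : A.IsHermitian) (r : ℝ) :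
    A.rpowH r = conjStarAlgAut ℂ _ hA.eigenvectorUnitary
      (diagonal fun i => ((hA.eigenvalues i ^ r : ℝ) : ℂ)) := by
  rw [rpowH, dif_pos hA]
  rfl

theorem rpowH_conjStarAlgAut_diagonal (U : unitary (Matrix n n ℂ)) (d : n → ℝ) (r : ℝ) :
    (conjStarAlgAut ℂ _ U (diagonal fun i => (d i : ℂ))).rpowH r =
      conjStarAlgAut ℂ _ U (diagonal fun i => ((d i ^ r : ℝ) : ℂ)) := by
  have hA := (isHermitian_diagonal_ofReal d).conjStarAlgAut_apply U
  rw [hA.rpowH_eq]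
  exact conjStarAlgAut_diagonal_comp_of_eq _ U hA.spectral_theorem_ofReal.symm (· ^ r)

theorem rpowH_diagonal (d : n → ℝ) (r : ℝ) :
    (diagonal fun i => (d i : ℂ)).rpowH r = diagonal fun i => ((d i ^ r : ℝ) : ℂ) := by
  simpa using rpowH_conjStarAlgAut_diagonal 1 d r

theorem isHermitian_rpowH (A : Matrix n n ℂ) (r : ℝ) : (A.rpowH r).IsHermitian := by
  by_cases hA : A.IsHermitian
  · rw [hA.rpowH_eq]
    exact (isHermitian_diagonal_ofReal _).conjStarAlgAut_apply _
  · rw [rpowH, dif_neg hA]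
    exact isHermitian_zero

theorem IsHermitian.rpowH_conjStarAlgAut {M : Matrix n n ℂ} (hM : M.IsHermitian)
    (U : unitary (Matrix n n ℂ)) (r : ℝ) :
    (Unitary.conjStarAlgAut ℂ _ U M).rpowH r = Unitary.conjStarAlgAut ℂ _ U (M.rpowH r) := by
  rw [hM.spectral_theorem_ofReal, ← conjStarAlgAut_mul_apply, rpowH_conjStarAlgAut_diagonal,
    rpowH_conjStarAlgAut_diagonal, conjStarAlgAut_mul_apply]

theorem gmean_conjStarAlgAut {S A : Matrix n n ℂ} (hS : S.IsHermitian) (hA : A.IsHermitian)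
    (U : unitary (Matrix n n ℂ)) (β : ℝ) :
    gmean β (conjStarAlgAut ℂ _ U S) (conjStarAlgAut ℂ _ U A) =
      conjStarAlgAut ℂ _ U (gmean β S A) := by
  have hmid : (S.rpowH (-(1/2)) * A * S.rpowH (-(1/2))).IsHermitian := by
    simpa only [(isHermitian_rpowH S _).eq] using
      isHermitian_conjTranspose_mul_mul (S.rpowH (-(1/2))) hA
  simp only [gmean, hS.rpowH_conjStarAlgAut, ← map_mul, hmid.rpowH_conjStarAlgAut]

theorem conjStarAlgAut_diagonal_apply_self (U : unitary (Matrix n n ℂ)) (d : n → ℝ) (i : n) :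
    conjStarAlgAut ℂ _ U (diagonal fun j => (d j : ℂ)) i i =
      ((∑ j, Complex.normSq ((U : Matrix n n ℂ) i j) * d j : ℝ) : ℂ) := by
  rw [conjStarAlgAut_apply, mul_apply]
  simp only [mul_diagonal, star_apply, Complex.ofReal_sum,
    Complex.ofReal_mul, Complex.normSq_eq_conj_mul_self, RCLike.star_def]
  exact Finset.sum_congr rfl fun j _ => by ring

theorem sum_normSq_apply_eq_one (U : unitary (Matrix n n ℂ)) (i : n) :
    ∑ j, Complex.normSq ((U : Matrix n n ℂ) i j) = 1 := by
  have h := conjStarAlgAut_diagonal_apply_self U 1 i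
  simp only [Pi.one_apply, Complex.ofReal_one, diagonal_one, map_one, one_apply_eq, mul_one] at h
  exact_mod_cast h.symm

theorem PosSemidef.re_rpowH_apply_self_le {B : Matrix n n ℂ} (hB : B.PosSemidef) {r : ℝ}
    (hr₀ : 0 ≤ r) (hr₁ : r ≤ 1) (i : n) : (B.rpowH r i i).re ≤ (B i i).re ^ r := by
  rw [hB.1.rpowH_eq, conjStarAlgAut_diagonal_apply_self, Complex.ofReal_re]
  conv_rhs => rw [hB.1.spectral_theorem_ofReal, conjStarAlgAut_diagonal_apply_self,
    Complex.ofReal_re]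
  exact (Real.concaveOn_rpow hr₀ hr₁).le_map_sum (fun j _ => Complex.normSq_nonneg _)
    (sum_normSq_apply_eq_one _ i) (fun j _ => hB.eigenvalues_nonneg j)

theorem gmean_diagonal {s a : n → ℝ} (hs : ∀ i, 0 < s i) (ha : ∀ i, 0 ≤ a i) (β : ℝ) :
    gmean β (diagonal fun i => (s i : ℂ)) (diagonal fun i => (a i : ℂ)) =
      diagonal fun i => ((s i ^ (1 - β) * a i ^ β : ℝ) : ℂ) := by
  simp only [gmean, rpowH_diagonal, diagonal_mul_diagonal, ← Complex.ofReal_mul,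
    Real.rpow_half_mul_rpow_mul_rpow_half (hs _) (ha _)]

theorem re_gmean_diagonal_apply_self_le {s : n → ℝ} (hs : ∀ i, 0 < s i) {A : Matrix n n ℂ}
    (hA : A.PosSemidef) {β : ℝ} (hβ₀ : 0 ≤ β) (hβ₁ : β ≤ 1) (i : n) :
    (gmean β (diagonal fun i => (s i : ℂ)) A i i).re ≤ s i ^ (1 - β) * (A i i).re ^ β := by
  set D := diagonal fun i => ((s i ^ (-(1/2) : ℝ) : ℝ) : ℂ)
  have hB : (D * A * D).PosSemidef := by
    have hD : Dᴴ = D := (isHermitian_diagonal_ofReal _).eq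
    simpa only [hD] using hA.mul_mul_conjTranspose_same D
  have hBii : ((D * A * D) i i).re = s i ^ (-(1/2) : ℝ) * (A i i).re * s i ^ (-(1/2) : ℝ) := by
    simp [D, diagonal_mul, mul_diagonal]
  have hentry : (gmean β (diagonal fun i => (s i : ℂ)) A i i).re =
      s i ^ (1/2 : ℝ) * ((D * A * D).rpowH β i i).re * s i ^ (1/2 : ℝ) := by
    simp [gmean, rpowH_diagonal, D, diagonal_mul, mul_diagonal]
  rw [hentry, ← Real.rpow_half_mul_rpow_mul_rpow_half (hs i)
    (Complex.nonneg_iff.mp hA.diag_nonneg).1, ← hBii]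
  have hs₀ : 0 ≤ s i ^ (1/2 : ℝ) := Real.rpow_nonneg (hs i).le _
  gcongr
  exact hB.re_rpowH_apply_self_le hβ₀ hβ₁ i

theorem exists_unitary_conjStarAlgAut_diagonal_of_apply_eq_zero {κ : Type*} [Fintype κ]
    [DecidableEq κ] (f : n → κ) {M : Matrix n n ℂ} (hM : M.IsHermitian)
    (hMf : ∀ i j, f i ≠ f j → M i j = 0) :
    ∃ V : unitary (Matrix n n ℂ), ∃ q : n → ℝ,
      M = conjStarAlgAut ℂ _ V (diagonal fun i => (q i : ℂ)) ∧
        ∀ i j, f i ≠ f j → (V : Matrix n n ℂ) i j = 0 := by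
  set e := Equiv.sigmaFiberEquiv f
  have hB : ∀ k, (M.submatrix ((↑) : {i // f i = k} → n) (↑)).IsHermitian :=
    fun k => hM.submatrix _
  set W : (k : κ) → Matrix {i // f i = k} {i // f i = k} ℂ := fun k => (hB k).eigenvectorUnitary
  set ψ := reindexAlgEquiv ℂ ℂ e
  have hψ : ∀ X, ψ (star X) = star (ψ X) := fun X => by
    simp [ψ, star_eq_conjTranspose, conjTranspose_submatrix]
  have hWb : star (blockDiagonal' W) = blockDiagonal' fun k => star (W k) :=
    blockDiagonal'_conjTranspose W
  have hV : ψ (blockDiagonal' W) ∈ unitary (Matrix n n ℂ) := by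
    rw [Unitary.mem_iff, ← hψ, ← map_mul, ← map_mul, hWb, ← blockDiagonal'_mul,
      ← blockDiagonal'_mul]
    have hone : (blockDiagonal' fun k => (1 : Matrix {i // f i = k} {i // f i = k} ℂ)) = 1 :=
      blockDiagonal'_one
    simp [W, hone]
  refine ⟨⟨_, hV⟩, fun i => (hB (f i)).eigenvalues ⟨i, rfl⟩, ?_, fun i j hij => ?_⟩
  · have hMψ : M = ψ (M.submatrix e e) := by simp [ψ, reindex_apply, submatrix_submatrix]
    have hD : (diagonal fun i => ((hB (f i)).eigenvalues ⟨i, rfl⟩ : ℂ)) =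
        ψ (blockDiagonal' fun k => diagonal fun x => ((hB k).eigenvalues x : ℂ)) := by
      rw [blockDiagonal'_diagonal]
      simp [ψ, reindex_apply, submatrix_diagonal_equiv]
      exact fun _ => rfl
    refine hMψ.trans ?_
    rw [submatrix_sigmaFiberEquiv_eq_blockDiagonal' f hMf, conjStarAlgAut_apply, hD]
    change _ = ψ (blockDiagonal' W) * _ * star (ψ (blockDiagonal' W))
    rw [← hψ, ← map_mul, ← map_mul, hWb, ← blockDiagonal'_mul, ← blockDiagonal'_mul]
    exact congrArg ψ (congrArg blockDiagonal' (funext fun k => (hB k).spectral_theorem))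
  · exact blockDiagonal'_apply_ne W (⟨i, rfl⟩ : {x // f x = f i}) (⟨j, rfl⟩ : {x // f x = f j}) hij

theorem exists_unitary_conjStarAlgAut_diagonal_of_commute {ρ σ : Matrix n n ℂ}
    (hρ : ρ.IsHermitian) (hσ : σ.IsHermitian) (hcomm : ρ * σ = σ * ρ) :
    ∃ U : unitary (Matrix n n ℂ), ∃ p s : n → ℝ,
      ρ = conjStarAlgAut ℂ _ U (diagonal fun i => (p i : ℂ)) ∧
        σ = conjStarAlgAut ℂ _ U (diagonal fun i => (s i : ℂ)) := by
  set W := hσ.eigenvectorUnitary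
  set s := hσ.eigenvalues
  set D := diagonal fun i => (s i : ℂ)
  set ρ' := conjStarAlgAut ℂ _ (star W) ρ
  have hρ' : ρ = conjStarAlgAut ℂ _ W ρ' := by
    rw [← conjStarAlgAut_mul_apply, mul_star_self, map_one, StarAlgEquiv.one_apply]
  have hσ' : conjStarAlgAut ℂ _ (star W) σ = D := by
    rw [← conjStarAlgAut_symm, StarAlgEquiv.symm_apply_eq]
    exact hσ.spectral_theorem_ofReal
  have hρ'D : D * ρ' = ρ' * D := by rw [← hσ', ← map_mul, ← map_mul, hcomm]
  -- the blocks are indexed by the finitely many eigenvalues of `σ`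
  obtain ⟨V, q, hρV, hV⟩ := exists_unitary_conjStarAlgAut_diagonal_of_apply_eq_zero
    (Set.rangeFactorization s) (hρ.conjStarAlgAut_apply _) fun i j hij =>
      diagonal_mul_eq_mul_diagonal_iff.mp hρ'D i j fun h => hij (Subtype.ext (by exact_mod_cast h))
  have hVD : D = conjStarAlgAut ℂ _ V D := by
    rw [conjStarAlgAut_apply, eq_mul_mul_star_iff V.2, diagonal_mul_eq_mul_diagonal_iff]
    exact fun i j hij => hV i j fun h => hij (by exact_mod_cast congrArg Subtype.val h)
  refine ⟨W * V, q, s, ?_, ?_⟩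
  · rw [hρ', conjStarAlgAut_mul_apply]
    exact congrArg _ hρV
  · rw [conjStarAlgAut_mul_apply, ← hVD, hσ.spectral_theorem_ofReal]

end Matrix

section

variable {n : Type*} [Fintype n] [DecidableEq n]

theorem QSharp_conjStarAlgAut (α : ℝ) (ρ : Matrix n n ℂ) {σ : Matrix n n ℂ}
    (hσ : σ.IsHermitian) (U : unitary (Matrix n n ℂ)) :
    QSharp α (conjStarAlgAut ℂ _ U ρ) (conjStarAlgAut ℂ _ U σ) = QSharp α ρ σ := by
  refine congrArg sInf (Set.ext fun t => ?_)
  rw [Set.mem_ofPred_eq, Set.mem_ofPred_eq, (EquivLike.surjective (conjStarAlgAut ℂ _ U)).exists]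
  refine exists_congr fun A => ?_
  rw [posSemidef_conjStarAlgAut_iff, trace_conjStarAlgAut]
  refine and_congr_right fun hA => ?_
  rw [gmean_conjStarAlgAut hσ hA.1, ← map_sub, posSemidef_conjStarAlgAut_iff]

theorem rpow_mul_rpow_le_re_apply_self_of_le_gmean {α : ℝ} (hα : 1 < α) {p s : n → ℝ}
    (hp : ∀ i, 0 ≤ p i) (hs : ∀ i, 0 < s i) {A : Matrix n n ℂ} (hA : A.PosSemidef)
    (hle : (gmean (1/α) (diagonal fun i => (s i : ℂ)) A - diagonal fun i => (p i : ℂ)).PosSemidef)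
    (i : n) : p i ^ α * s i ^ (1 - α) ≤ (A i i).re := by
  have hα₀ : 0 < α := by linarith
  have ha : 0 ≤ (A i i).re := (Complex.nonneg_iff.mp hA.diag_nonneg).1
  have hpi : p i ≤ s i ^ (1 - 1/α) * (A i i).re ^ (1/α) := by
    have hdiff := (Complex.nonneg_iff.mp (hle.diag_nonneg (i := i))).1
    rw [Matrix.sub_apply, Complex.sub_re, diagonal_apply_eq, Complex.ofReal_re, sub_nonneg] at hdiff
    exact hdiff.trans (re_gmean_diagonal_apply_self_le hs hA (by positivity)
      ((div_le_one hα₀).mpr hα.le) i)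
  rw [← Real.rpow_one_sub_inv_mul_rpow_inv (hp i) (hs i) hα₀.ne'] at hpi
  have hc : 0 ≤ p i ^ α * s i ^ (1 - α) := by have := hp i; have := hs i; positivity
  exact (Real.rpow_le_rpow_iff hc ha (one_div_pos.mpr hα₀)).mp
    (le_of_mul_le_mul_left hpi (Real.rpow_pos_of_pos (hs i) _))

theorem QSharp_diagonal {α : ℝ} (hα : 1 < α) {p s : n → ℝ} (hp : ∀ i, 0 ≤ p i)
    (hs : ∀ i, 0 < s i) :
    QSharp α (diagonal fun i => (p i : ℂ)) (diagonal fun i => (s i : ℂ)) =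
      ∑ i, p i ^ α * s i ^ (1 - α) := by
  have hc : ∀ i, 0 ≤ p i ^ α * s i ^ (1 - α) := fun i => by have := hp i; have := hs i; positivity
  refine IsLeast.csInf_eq ⟨⟨diagonal fun i => ((p i ^ α * s i ^ (1 - α) : ℝ) : ℂ), ?_, ?_, ?_⟩, ?_⟩
  · exact posSemidef_diagonal_iff.mpr fun i => Complex.zero_le_real.mpr (hc i)
  · simp only [gmean_diagonal hs hc,
      Real.rpow_one_sub_inv_mul_rpow_inv (hp _) (hs _) (by linarith : α ≠ 0), sub_self]
    exact PosSemidef.zero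
  · simp [trace_diagonal]
  · rintro t ⟨A, hA, hle, rfl⟩
    rw [trace, Complex.re_sum]
    exact Finset.sum_le_sum fun i _ => rpow_mul_rpow_le_re_apply_self_of_le_gmean hα hp hs hA hle i

end

theorem DSharp_commuting_general
    {n : Type*} [Fintype n] [DecidableEq n]
    (α : ℝ) (hα : 1 < α)
    (ρ σ : Matrix n n ℂ) (hρ : ρ.PosSemidef) (hσ : σ.PosDef)
    (hcomm : ρ * σ = σ * ρ) :
    DSharp α ρ σ = 1/(α-1) * Real.logb 2 ((ρ.rpowH α * σ.rpowH (1-α)).trace.re) := by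
  obtain ⟨U, p, s, rfl, rfl⟩ := exists_unitary_conjStarAlgAut_diagonal_of_commute hρ.1 hσ.1 hcomm
  have hp : ∀ i, 0 ≤ p i := fun i => Complex.zero_le_real.mp
    (posSemidef_diagonal_iff.mp ((posSemidef_conjStarAlgAut_iff U).mp hρ) i)
  have hs : ∀ i, 0 < s i := fun i => Complex.zero_lt_real.mp
    (posDef_diagonal_iff.mp ((posDef_conjStarAlgAut_iff U).mp hσ) i)
  rw [DSharp, QSharp_conjStarAlgAut _ _ (isHermitian_diagonal_ofReal s), QSharp_diagonal hα hp hs,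
    rpowH_conjStarAlgAut_diagonal, rpowH_conjStarAlgAut_diagonal, ← map_mul, trace_conjStarAlgAut,
    diagonal_mul_diagonal, trace_diagonal, Complex.re_sum]
  simp

/-- for commuting ρ and σ, D^#_α coincides with the classical
α-Rényi divergence (1/(α−1))·log₂ tr(ρ^α σ^(1−α)). -/
theorem DSharp_commuting
    {n : Type*} [Fintype n] [DecidableEq n]
    (α : ℝ) (hα : 1 < α)
    (ρ σ : Matrix n n ℂ) (hρ : ρ.PosSemidef) (hρ0 : ρ ≠ 0) (hσ : σ.PosDef)
    (hcomm : ρ * σ = σ * ρ) :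
    DSharp α ρ σ = 1/(α-1) * Real.logb 2 ((ρ.rpowH α * σ.rpowH (1-α)).trace.re) :=
  DSharp_commuting_general α hα ρ σ hρ hσ hcomm
end

section
/- Let ρ be a positive semidefinite complex matrix with tr(ρ) = 1 and σ a positive definite complex matrix of the same size. Then D^#_α(ρ‖σ) → D_max(ρ‖σ) as α → ∞, where D_max(ρ‖σ) := log₂ inf { λ ∈ ℝ : ρ ≤ λ·σ } (equivalently D_max(ρ‖σ) = log₂ ‖σ^(−1/2) ρ σ^(−1/2)‖_∞). -/
/-!
Let `λ*` be the least `λ` with `ρ ≤ λ σ`; the infimum is attained, and `λ* > 0` because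
`tr ρ = 1`. Since `σ #_β (c σ) = c^β σ`, the matrix `λ*^α σ` is feasible for `Q^#_α`, so
`Q^#_α ≤ tr(σ) λ*^α`. Conversely, if `A` is feasible and `m > 0` is a lower bound of `σ`, then
`A ≤ (tr A / m) σ`; conjugating by `σ^(-1/2)` and applying `x ↦ x^(1/α)` to a matrix bounded by a
scalar gives `ρ ≤ σ #_{1/α} A ≤ (tr A / m)^(1/α) σ`, whence `tr A ≥ m λ*^α`. Taking `log₂` of
`m λ*^α ≤ Q^#_α ≤ tr(σ) λ*^α` and dividing by `α - 1` gives the limit `log₂ λ*`.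
-/

open Matrix Filter
open scoped Kronecker Classical ComplexOrder

/-- Max-relative entropy D_max(ρ‖σ) := log₂ inf { λ : ρ ≤ λ·σ }. -/
noncomputable def Dmax {n : Type*} [Fintype n] [DecidableEq n]
    (ρ σ : Matrix n n ℂ) : ℝ :=
  Real.logb 2 (sInf { lam : ℝ | ((lam : ℂ) • σ - ρ).PosSemidef })


open scoped MatrixOrder Topology

namespace Matrix

variable {n : Type*} [Fintype n] [DecidableEq n]

lemma rpowH_eq_cfc (A : Matrix n n ℂ) (r : ℝ) : A.rpowH r = cfc (· ^ r : ℝ → ℝ) A := by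
  by_cases hA : A.IsHermitian
  · rw [rpowH, dif_pos hA, hA.cfc_eq]
    rfl
  · rw [rpowH, dif_neg hA]
    exact (cfc_apply_of_not_predicate A hA).symm

lemma isSelfAdjoint_rpowH (A : Matrix n n ℂ) (r : ℝ) : IsSelfAdjoint (A.rpowH r) := by
  rw [rpowH_eq_cfc]
  exact cfc_predicate _ A

lemma IsHermitian.rpowH_zero {A : Matrix n n ℂ} (hA : A.IsHermitian) : A.rpowH 0 = 1 := by
  simp only [rpowH_eq_cfc, Real.rpow_zero]
  exact cfc_const_one ℝ A

lemma IsHermitian.rpowH_one {A : Matrix n n ℂ} (hA : A.IsHermitian) : A.rpowH 1 = A := by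
  simp only [rpowH_eq_cfc, Real.rpow_one]
  exact cfc_id' ℝ A hA.isSelfAdjoint

lemma PosDef.rpowH_mul_rpowH {σ : Matrix n n ℂ} (hσ : σ.PosDef) (r t : ℝ) :
    σ.rpowH r * σ.rpowH t = σ.rpowH (r + t) := by
  have hfin : (spectrum ℝ σ).Finite := finite_real_spectrum
  simp only [rpowH_eq_cfc]
  rw [← cfc_mul _ _ σ (hfin.continuousOn _) (hfin.continuousOn _)]
  exact cfc_congr fun x hx => (Real.rpow_add (hσ.isStrictlyPositive.spectrum_pos hx) r t).symm

lemma PosDef.rpowH_neg_half_mul_mul_rpowH_neg_half {σ : Matrix n n ℂ} (hσ : σ.PosDef) :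
    σ.rpowH (-(1/2)) * σ * σ.rpowH (-(1/2)) = 1 := by
  conv_lhs => enter [1, 2]; rw [← hσ.1.rpowH_one]
  rw [hσ.rpowH_mul_rpowH, hσ.rpowH_mul_rpowH]
  norm_num [hσ.1.rpowH_zero]

lemma PosDef.rpowH_half_mul_self {σ : Matrix n n ℂ} (hσ : σ.PosDef) :
    σ.rpowH (1/2) * σ.rpowH (1/2) = σ := by
  rw [hσ.rpowH_mul_rpowH]
  norm_num [hσ.1.rpowH_one]

lemma PosDef.exists_pos_algebraMap_le {σ : Matrix n n ℂ} (hσ : σ.PosDef) :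
    ∃ m > 0, algebraMap ℝ _ m ≤ σ := by
  cases isEmpty_or_nonempty n
  · exact ⟨1, one_pos, (Subsingleton.elim _ _).le⟩
  · exact (CFC.exists_pos_algebraMap_le_iff hσ.1.isSelfAdjoint).2
      fun _ hx => hσ.isStrictlyPositive.spectrum_pos hx

lemma PosSemidef.le_algebraMap_trace_re {A : Matrix n n ℂ} (hA : A.PosSemidef) :
    A ≤ algebraMap ℝ _ A.trace.re := by
  rw [le_algebraMap_iff_spectrum_le hA.1.isSelfAdjoint, hA.1.spectrum_real_eq_range_eigenvalues]
  rintro _ ⟨i, rfl⟩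
  rw [hA.1.trace_eq_sum_eigenvalues, Complex.re_sum]
  simp only [Complex.coe_algebraMap, Complex.ofReal_re]
  exact Finset.single_le_sum (fun j _ => hA.eigenvalues_nonneg j) (Finset.mem_univ i)

lemma PosSemidef.le_trace_re_div_smul {A σ : Matrix n n ℂ} (hA : A.PosSemidef) {m : ℝ}
    (hm : 0 < m) (hmσ : algebraMap ℝ _ m ≤ σ) : A ≤ (A.trace.re / m) • σ :=
  calc A ≤ algebraMap ℝ _ A.trace.re := hA.le_algebraMap_trace_re
    _ = (A.trace.re / m) • algebraMap ℝ _ m := by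
      rw [Algebra.smul_def, ← map_mul, div_mul_cancel₀ _ hm.ne']
    _ ≤ (A.trace.re / m) • σ :=
      smul_le_smul_of_nonneg_left hmσ (div_nonneg (Complex.nonneg_iff.1 hA.trace_nonneg).1 hm.le)

lemma PosDef.gmean_smul_self {σ : Matrix n n ℂ} (hσ : σ.PosDef) (β c : ℝ) :
    gmean β σ (c • σ) = c ^ β • σ := by
  rw [gmean, mul_smul_comm, smul_mul_assoc, hσ.rpowH_neg_half_mul_mul_rpowH_neg_half,
    ← Algebra.algebraMap_eq_smul_one, rpowH_eq_cfc (algebraMap ℝ _ c), cfc_algebraMap,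
    ← Algebra.commutes, mul_assoc, hσ.rpowH_half_mul_self, ← Algebra.smul_def]

lemma PosDef.gmean_le_smul {σ A : Matrix n n ℂ} (hσ : σ.PosDef) (hA : A.PosSemidef) {β t : ℝ}
    (hβ : 0 ≤ β) (hAt : A ≤ t • σ) : gmean β σ A ≤ t ^ β • σ := by
  set B := σ.rpowH (-(1/2)) * A * σ.rpowH (-(1/2))
  have hB : 0 ≤ B := (isSelfAdjoint_rpowH σ _).conjugate_nonneg hA.nonneg
  have hBt : B ≤ algebraMap ℝ _ t := by
    have := (isSelfAdjoint_rpowH σ (-(1/2))).conjugate_le_conjugate hAt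
    rwa [mul_smul_comm, smul_mul_assoc, hσ.rpowH_neg_half_mul_mul_rpowH_neg_half,
      ← Algebra.algebraMap_eq_smul_one] at this
  have hBβ : B.rpowH β ≤ algebraMap ℝ _ (t ^ β) := by
    rw [rpowH_eq_cfc]
    refine cfc_le_algebraMap _ _ B fun x hx => ?_
    exact Real.rpow_le_rpow (spectrum_nonneg_of_nonneg hB hx)
      ((le_algebraMap_iff_spectrum_le hB.isSelfAdjoint).1 hBt x hx) hβ
  calc gmean β σ A = σ.rpowH (1/2) * B.rpowH β * σ.rpowH (1/2) := rfl
    _ ≤ σ.rpowH (1/2) * algebraMap ℝ _ (t ^ β) * σ.rpowH (1/2) :=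
      (isSelfAdjoint_rpowH σ _).conjugate_le_conjugate hBβ
    _ = t ^ β • σ := by
      rw [← Algebra.commutes, mul_assoc, hσ.rpowH_half_mul_self, ← Algebra.smul_def]

end Matrix

lemma pos_of_trace_eq_one_of_le_smul {n : Type*} [Fintype n] {ρ σ : Matrix n n ℂ}
    (hρtr : ρ.trace = 1) (hσ : σ.PosSemidef) {lam : ℝ} (h : ρ ≤ lam • σ) : 0 < lam := by
  have htr := (Complex.nonneg_iff.1 (Matrix.le_iff.1 h).trace_nonneg).1
  rw [Matrix.trace_sub, Matrix.trace_smul, hρtr, Complex.sub_re, Complex.real_smul,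
    Complex.re_ofReal_mul, Complex.one_re] at htr
  have hσtr := (Complex.nonneg_iff.1 hσ.trace_nonneg).1
  by_contra! hlam
  nlinarith

section MaxRatio

variable {n : Type*} [Fintype n] [DecidableEq n]

noncomputable def maxRatio (ρ σ : Matrix n n ℂ) : ℝ := sInf {lam : ℝ | ρ ≤ lam • σ}

lemma Dmax_eq_logb_maxRatio (ρ σ : Matrix n n ℂ) : Dmax ρ σ = Real.logb 2 (maxRatio ρ σ) := by
  simp only [Dmax, maxRatio, Complex.coe_smul]
  rfl

lemma isLeast_maxRatio {ρ σ : Matrix n n ℂ} (hρ : ρ.PosSemidef) (hρtr : ρ.trace = 1)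
    (hσ : σ.PosDef) : IsLeast {lam : ℝ | ρ ≤ lam • σ} (maxRatio ρ σ) := by
  obtain ⟨m, hm, hmσ⟩ := hσ.exists_pos_algebraMap_le
  have hne : {lam : ℝ | ρ ≤ lam • σ}.Nonempty := ⟨_, hρ.le_trace_re_div_smul hm hmσ⟩
  have hbdd : BddBelow {lam : ℝ | ρ ≤ lam • σ} :=
    ⟨0, fun _ h => (pos_of_trace_eq_one_of_le_smul hρtr hσ.posSemidef h).le⟩
  have hclosed : IsClosed {lam : ℝ | ρ ≤ lam • σ} := by
    -- the C⋆-algebra structure of the L2 operator norm makes the Loewner order closed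
    open scoped Matrix.Norms.L2Operator in
    exact isClosed_le continuous_const (continuous_id.smul continuous_const)
  exact ⟨hclosed.csInf_mem hne hbdd, fun _ h => csInf_le hbdd h⟩

end MaxRatio

section QSharp

variable {n : Type*} [Fintype n] [DecidableEq n] {α : ℝ} {ρ σ : Matrix n n ℂ}

lemma QSharp_le_trace_re {A : Matrix n n ℂ} (hA : A.PosSemidef)
    (h : ρ ≤ Matrix.gmean (1/α) σ A) : QSharp α ρ σ ≤ A.trace.re :=
  csInf_le ⟨0, by rintro _ ⟨B, hB, -, rfl⟩; exact (Complex.nonneg_iff.1 hB.trace_nonneg).1⟩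
    ⟨A, hA, h, rfl⟩

lemma le_QSharp {c : ℝ} (hne : ∃ A : Matrix n n ℂ, A.PosSemidef ∧ ρ ≤ Matrix.gmean (1/α) σ A)
    (h : ∀ A : Matrix n n ℂ, A.PosSemidef → ρ ≤ Matrix.gmean (1/α) σ A → c ≤ A.trace.re) :
    c ≤ QSharp α ρ σ := by
  obtain ⟨A, hA, hfeas⟩ := hne
  refine le_csInf ⟨_, A, hA, hfeas, rfl⟩ ?_
  rintro _ ⟨B, hB, hfeas, rfl⟩
  exact h B hB hfeas

lemma le_gmean_rpow_smul (hσ : σ.PosDef) (hα : α ≠ 0) {lam : ℝ} (hlam : 0 ≤ lam)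
    (h : ρ ≤ lam • σ) : ρ ≤ Matrix.gmean (1/α) σ (lam ^ α • σ) := by
  rwa [hσ.gmean_smul_self, one_div, Real.rpow_rpow_inv hlam hα]

lemma QSharp_le_rpow_mul (hσ : σ.PosDef) (hα : α ≠ 0) {lam : ℝ} (hlam : 0 ≤ lam)
    (h : ρ ≤ lam • σ) : QSharp α ρ σ ≤ σ.trace.re * lam ^ α := by
  convert QSharp_le_trace_re (hσ.posSemidef.smul (Real.rpow_nonneg hlam α))
    (le_gmean_rpow_smul hσ hα hlam h) using 1
  rw [Matrix.trace_smul, Complex.real_smul, Complex.re_ofReal_mul, mul_comm]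

lemma mul_rpow_le_QSharp (hσ : σ.PosDef) (hα : 0 < α) {m : ℝ} (hm : 0 < m)
    (hmσ : algebraMap ℝ _ m ≤ σ) {lam : ℝ} (hlam : 0 ≤ lam)
    (hleast : IsLeast {lam : ℝ | ρ ≤ lam • σ} lam) : m * lam ^ α ≤ QSharp α ρ σ := by
  refine le_QSharp ⟨_, hσ.posSemidef.smul (Real.rpow_nonneg hlam α),
    le_gmean_rpow_smul hσ hα.ne' hlam hleast.1⟩ fun A hA hfeas => ?_
  have htr : 0 ≤ A.trace.re / m := div_nonneg (Complex.nonneg_iff.1 hA.trace_nonneg).1 hm.le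
  have hρA : ρ ≤ (A.trace.re / m) ^ (1/α) • σ :=
    hfeas.trans (hσ.gmean_le_smul hA (by positivity) (hA.le_trace_re_div_smul hm hmσ))
  have := Real.rpow_le_rpow hlam (hleast.2 hρA) hα.le
  rw [one_div, Real.rpow_inv_rpow htr hα.ne', le_div_iff₀ hm] at this
  linarith

end QSharp

lemma tendsto_one_div_sub_one_mul_add_mul (c L : ℝ) :
    Tendsto (fun α : ℝ => 1 / (α - 1) * (c + α * L)) atTop (𝓝 L) := by
  have hinv : Tendsto (fun α : ℝ => (α - 1)⁻¹) atTop (𝓝 0) :=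
    tendsto_inv_atTop_zero.comp (tendsto_atTop_add_const_right _ (-1) tendsto_id)
  have h := (hinv.const_mul (c + L)).const_add L
  rw [mul_zero, add_zero] at h
  refine h.congr' ?_
  filter_upwards [eventually_gt_atTop 1] with α hα
  field_simp [sub_ne_zero.2 hα.ne']
  ring

lemma tendsto_one_div_sub_one_mul_logb_of_rpow_bounds {f : ℝ → ℝ} {a b lam : ℝ} (ha : 0 < a)
    (hlam : 0 < lam) (hf : ∀ᶠ α in atTop, a * lam ^ α ≤ f α ∧ f α ≤ b * lam ^ α) :
    Tendsto (fun α => 1 / (α - 1) * Real.logb 2 (f α)) atTop (𝓝 (Real.logb 2 lam)) := by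
  have hlogb (c : ℝ) (hc : 0 < c) (α : ℝ) :
      Real.logb 2 (c * lam ^ α) = Real.logb 2 c + α * Real.logb 2 lam := by
    rw [Real.logb_mul hc.ne' (Real.rpow_pos_of_pos hlam α).ne',
      Real.logb_rpow_eq_mul_logb_of_pos hlam]
  have hb : 0 < b := by
    obtain ⟨α, hlo, hhi⟩ := hf.exists
    have := Real.rpow_pos_of_pos hlam α
    exact pos_of_mul_pos_left ((mul_pos ha this).trans_le (hlo.trans hhi)) this.le
  refine tendsto_of_tendsto_of_tendsto_of_le_of_le'
    (tendsto_one_div_sub_one_mul_add_mul (Real.logb 2 a) _)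
    (tendsto_one_div_sub_one_mul_add_mul (Real.logb 2 b) _) ?_ ?_ <;>
    filter_upwards [hf, eventually_gt_atTop 1] with α ⟨hlo, hhi⟩ hα
  all_goals have hcoef : 0 ≤ 1 / (α - 1) := one_div_nonneg.2 (sub_nonneg.2 hα.le)
  all_goals have hpos : 0 < a * lam ^ α := mul_pos ha (Real.rpow_pos_of_pos hlam α)
  · rw [← hlogb a ha]
    gcongr
    norm_num
  · rw [← hlogb b hb]
    gcongr
    · norm_num
    · exact hpos.trans_le hlo

/-- D^#_α(ρ‖σ) → D_max(ρ‖σ) as α → ∞, for a density matrix ρ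
and positive definite σ. -/
theorem DSharp_tendsto_Dmax
    {n : Type*} [Fintype n] [DecidableEq n]
    (ρ σ : Matrix n n ℂ) (hρ : ρ.PosSemidef) (hρtr : ρ.trace = 1) (hσ : σ.PosDef) :
    Tendsto (fun α : ℝ => DSharp α ρ σ) atTop (nhds (Dmax ρ σ)) := by
  obtain ⟨m, hm, hmσ⟩ := hσ.exists_pos_algebraMap_le
  have hleast := isLeast_maxRatio hρ hρtr hσ
  have hpos := pos_of_trace_eq_one_of_le_smul hρtr hσ.posSemidef hleast.1
  rw [Dmax_eq_logb_maxRatio]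
  refine tendsto_one_div_sub_one_mul_logb_of_rpow_bounds (b := σ.trace.re) hm hpos ?_
  filter_upwards [eventually_gt_atTop 0] with α hα
  exact ⟨mul_rpow_le_QSharp hσ hα hm hmσ hpos.le hleast,
    QSharp_le_rpow_mul hσ hα.ne' hpos.le hleast.1⟩
end
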